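/- Let k ≥ 2 and let G be a finite simple graph with no isolated vertices that contains no star S_k (a star with k edges), no matching of size k, and no disjoint union S_{k−1} ∪ K₂ (a star with k−1 edges together with a disjoint edge) as a subgraph. Then e(G) ≤ (k−1)². -/

import Mathlib

def IsMatchingSet {V : Type*} (G : SimpleGraph V) (M : Finset (Sym2 V)) : Prop :=
  (∀ e ∈ M, e ∈ G.edgeSet) ∧ ∀ e ∈ M, ∀ f ∈ M, e ≠ f → ∀ v, v ∈ e → v ∉ f

def ContainsCopy {α β : Type*} (H : SimpleGraph α) (G : SimpleGraph β) : Prop :=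
  ∃ f : α → β, Function.Injective f ∧ ∀ a b, H.Adj a b → G.Adj (f a) (f b)

def kMatching (k : ℕ) : SimpleGraph (Fin (2 * k)) :=
  SimpleGraph.fromRel (fun a b => (a : ℕ) / 2 = (b : ℕ) / 2)

def starGraph (m : ℕ) : SimpleGraph (Fin 1 ⊕ Fin m) := completeBipartiteGraph (Fin 1) (Fin m)

def disjUnionGraph {α β : Type*} (G : SimpleGraph α) (H : SimpleGraph β) : SimpleGraph (α ⊕ β) :=
  SimpleGraph.fromRel (fun x y => match x, y with
    | Sum.inl a, Sum.inl b => G.Adj a b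
    | Sum.inr a, Sum.inr b => H.Adj a b
    | _, _ => False)

/-!
A vertex `v` of degree `k - 1` together with an edge avoiding `v` and its neighbours would be a
copy of `S_{k-1} ∪ K₂`, so if such a `v` exists its neighbourhood is a vertex cover and
`e(G) ≤ ∑_{u ∈ N(v)} deg u ≤ (k - 1)²`. Otherwise `Δ(G) ≤ k - 2` while `ν(G) ≤ k - 1`, and
`e(G) ≤ ν(G) (Δ(G) + 1)` concludes.

That bound is proved by induction on `e(G)`. If deleting the edges at some vertex `v` lowers `ν`,
then `e(G) = e(G - v) + deg v ≤ (ν - 1)(Δ + 1) + Δ`. If the non-isolated vertices do not lie in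
one component, `G` splits into two graphs with disjoint supports. Otherwise, by Gallai's lemma, a
maximum matching `M` misses at most one non-isolated vertex, all of whose neighbours are covered
by `M`, so `2 e(G) ≤ 2ν Δ + 2ν`. Gallai's lemma follows an alternating path of `M ∆ M'`, where
`M'` is a maximum matching missing a neighbour of a vertex that `M` misses.
-/

open Finset

section MatchingBound

variable {V : Type*}

def Covers (M : Finset (Sym2 V)) (v : V) : Prop := ∃ e ∈ M, v ∈ e

section Matchings

variable {G G' : SimpleGraph V} {M M' N : Finset (Sym2 V)} {e : Sym2 V} {a b v : V}

lemma Covers.mono (h : N ⊆ M) : Covers N v → Covers M v := fun ⟨e, he, hv⟩ => ⟨e, h he, hv⟩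

lemma IsMatchingSet.subset (hM : IsMatchingSet G M) (h : N ⊆ M) : IsMatchingSet G N :=
  ⟨fun e he => hM.1 e (h he), fun e he f hf => hM.2 e (h he) f (h hf)⟩

lemma IsMatchingSet.mono (h : G ≤ G') (hM : IsMatchingSet G M) : IsMatchingSet G' M :=
  ⟨fun e he => SimpleGraph.edgeSet_mono h (hM.1 e he), hM.2⟩

lemma IsMatchingSet.mem_support (hM : IsMatchingSet G M) (hv : Covers M v) : v ∈ G.support := by
  obtain ⟨e, he, hve⟩ := hv
  obtain ⟨u, rfl⟩ := Sym2.mem_iff_exists.mp hve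
  exact (hM.1 _ he : G.Adj v u).left_mem_support

lemma disjoint_of_not_covers (h : ∀ v, Covers M v → ¬ Covers M' v) : Disjoint M M' := by
  rw [disjoint_left]
  intro e he he'
  induction e using Sym2.ind with
  | _ a b => exact h a ⟨_, he, Sym2.mem_mk_left a b⟩ ⟨_, he', Sym2.mem_mk_left a b⟩

lemma IsMatchingSet.not_covers_of_deleteIncidenceSet
    (hM : IsMatchingSet (G.deleteIncidenceSet v) M) : ¬ Covers M v := by
  rintro ⟨e, he, hve⟩
  obtain ⟨u, rfl⟩ := Sym2.mem_iff_exists.mp hve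
  exact (SimpleGraph.deleteIncidenceSet_adj.mp (hM.1 _ he)).2.1 rfl

variable [DecidableEq V]

@[simp]
lemma covers_insert : Covers (insert e M) v ↔ v ∈ e ∨ Covers M v := by
  simp [Covers]

lemma IsMatchingSet.covers_erase_iff (hM : IsMatchingSet G M) (he : e ∈ M) :
    Covers (M.erase e) v ↔ Covers M v ∧ v ∉ e := by
  constructor
  · rintro ⟨f, hf, hvf⟩
    exact ⟨⟨f, mem_of_mem_erase hf, hvf⟩, fun hve => hM.2 f (mem_of_mem_erase hf) e he
      (ne_of_mem_erase hf) v hvf hve⟩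
  · rintro ⟨⟨f, hf, hvf⟩, hve⟩
    exact ⟨f, mem_erase.mpr ⟨by rintro rfl; exact hve hvf, hf⟩, hvf⟩

lemma IsMatchingSet.insert (hM : IsMatchingSet G M) (hab : G.Adj a b) (ha : ¬ Covers M a)
    (hb : ¬ Covers M b) : IsMatchingSet G (insert s(a, b) M) := by
  have hfree : ∀ v ∈ s(a, b), ¬ Covers M v := by
    simp only [Sym2.mem_iff]
    rintro v (rfl | rfl) <;> assumption
  refine ⟨?_, ?_⟩
  · simp only [mem_insert, forall_eq_or_imp]
    exact ⟨hab, hM.1⟩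
  · simp only [mem_insert]
    rintro e (rfl | he) f (rfl | hf) hef v hve hvf
    · exact hef rfl
    · exact hfree v hve ⟨f, hf, hvf⟩
    · exact hfree v hvf ⟨e, he, hve⟩
    · exact hM.2 e he f hf hef v hve hvf

lemma card_insert_of_not_covers (ha : ¬ Covers M a) : #(insert s(a, b) M) = #M + 1 :=
  card_insert_of_notMem fun h => ha ⟨_, h, Sym2.mem_mk_left a b⟩

lemma IsMatchingSet.union (hM : IsMatchingSet G M) (hM' : IsMatchingSet G M')
    (h : ∀ v, Covers M v → ¬ Covers M' v) : IsMatchingSet G (M ∪ M') := by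
  refine ⟨fun e he => (mem_union.mp he).elim (hM.1 e) (hM'.1 e), ?_⟩
  simp only [mem_union]
  rintro e (he | he) f (hf | hf) hef v hve hvf
  · exact hM.2 e he f hf hef v hve hvf
  · exact h v ⟨e, he, hve⟩ ⟨f, hf, hvf⟩
  · exact h v ⟨f, hf, hvf⟩ ⟨e, he, hve⟩
  · exact hM'.2 e he f hf hef v hve hvf

end Matchings

section Exchange

variable [DecidableEq V] {G : SimpleGraph V} {M M' N : Finset (Sym2 V)} {w x x₁ x₂ : V}

def AugmentableWithin (G : SimpleGraph V) (M M' : Finset (Sym2 V)) : Prop :=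
  ∃ N, IsMatchingSet G N ∧ #N = #M' + 1 ∧ ∀ v, Covers N v → Covers M v ∨ Covers M' v

def FreeableAt (G : SimpleGraph V) (M M' : Finset (Sym2 V)) (w : V) : Prop :=
  ∃ N x, IsMatchingSet G N ∧ #N = #M ∧ ¬ Covers N w ∧ Covers M' x ∧
    ∀ v, Covers N v → Covers M v ∨ v = x

lemma augmentableWithin_of_not_covers (hM' : IsMatchingSet G M') (hwx₁ : G.Adj w x₁)
    (he : s(w, x₁) ∈ M) (hw' : ¬ Covers M' w) (hx₁ : ¬ Covers M' x₁) :
    AugmentableWithin G M M' :=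
  ⟨_, hM'.insert hwx₁ hw' hx₁, card_insert_of_not_covers hw',
    fun _ hv => (covers_insert.mp hv).imp_left fun hv => ⟨_, he, hv⟩⟩

lemma AugmentableWithin.of_erase
    (h : AugmentableWithin G (M.erase s(w, x₁)) (M'.erase s(x₁, x₂)))
    (hM : IsMatchingSet G M) (hM' : IsMatchingSet G M') (he : s(w, x₁) ∈ M)
    (hf : s(x₁, x₂) ∈ M') (hw' : ¬ Covers M' w) : AugmentableWithin G M M' := by
  obtain ⟨N, hN, hcard, hcov⟩ := h
  have hNw : ¬ Covers N w := fun h => (hcov w h).elim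
    (fun h => ((hM.covers_erase_iff he).mp h).2 (Sym2.mem_mk_left w x₁))
    (fun h => hw' (h.mono (erase_subset _ M')))
  have hNx₁ : ¬ Covers N x₁ := fun h => (hcov x₁ h).elim
    (fun h => ((hM.covers_erase_iff he).mp h).2 (Sym2.mem_mk_right w x₁))
    (fun h => ((hM'.covers_erase_iff hf).mp h).2 (Sym2.mem_mk_left x₁ x₂))
  refine ⟨_, hN.insert (hM.1 _ he) hNw hNx₁, ?_, fun v hv => ?_⟩
  · rw [card_insert_of_not_covers hNw, hcard, card_erase_add_one hf]
  · rcases covers_insert.mp hv with hv | hv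
    · exact .inl ⟨_, he, hv⟩
    · exact (hcov v hv).imp (·.mono (erase_subset _ M)) (·.mono (erase_subset _ M'))

lemma freeableAt_of_insert (hN : IsMatchingSet G N) (hcard : #N + 1 = #M) (hx₁x₂ : G.Adj x₁ x₂)
    (hNw : ¬ Covers N w) (hNx₁ : ¬ Covers N x₁) (hNx₂ : ¬ Covers N x₂) (hwx₁ : w ≠ x₁)
    (hwx₂ : w ≠ x₂) (hx₁ : Covers M x₁) (hx₂ : Covers M x₂ ∨ x₂ = x) (hx : Covers M' x)
    (hcov : ∀ v, Covers N v → Covers M v ∨ v = x) : FreeableAt G M M' w := by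
  refine ⟨_, x, hN.insert hx₁x₂ hNx₁ hNx₂, by rw [card_insert_of_not_covers hNx₁, hcard],
    ?_, hx, fun v hv => ?_⟩
  · simp only [covers_insert, Sym2.mem_iff, not_or]
    exact ⟨⟨hwx₁, hwx₂⟩, hNw⟩
  · simp only [covers_insert, Sym2.mem_iff] at hv
    rcases hv with (rfl | rfl) | hv
    exacts [.inl hx₁, hx₂, hcov v hv]

lemma FreeableAt.of_erase (h : FreeableAt G (M.erase s(w, x₁)) (M'.erase s(x₁, x₂)) x₂)
    (hM : IsMatchingSet G M) (hM' : IsMatchingSet G M') (he : s(w, x₁) ∈ M)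
    (hf : s(x₁, x₂) ∈ M') (hw' : ¬ Covers M' w) (hx₂ : Covers M x₂) : FreeableAt G M M' w := by
  obtain ⟨N, x, hN, hcard, hNx₂, hx, hcov⟩ := h
  have hwx : w ≠ x := by rintro rfl; exact hw' (hx.mono (erase_subset _ M'))
  have hx₁x : x₁ ≠ x := by
    rintro rfl; exact ((hM'.covers_erase_iff hf).mp hx).2 (Sym2.mem_mk_left x₁ x₂)
  have hNw : ¬ Covers N w := fun h => (hcov w h).elim
    (fun h => ((hM.covers_erase_iff he).mp h).2 (Sym2.mem_mk_left w x₁)) hwx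
  have hNx₁ : ¬ Covers N x₁ := fun h => (hcov x₁ h).elim
    (fun h => ((hM.covers_erase_iff he).mp h).2 (Sym2.mem_mk_right w x₁)) hx₁x
  have hwx₂ : w ≠ x₂ := by rintro rfl; exact hw' ⟨_, hf, Sym2.mem_mk_right x₁ w⟩
  exact freeableAt_of_insert hN (by rw [hcard, card_erase_add_one he]) (hM'.1 _ hf) hNw hNx₁
    hNx₂ (hM.1 _ he).ne hwx₂ ⟨_, he, Sym2.mem_mk_right w x₁⟩ (.inl hx₂)
    (hx.mono (erase_subset _ M')) fun v hv => (hcov v hv).imp_left (·.mono (erase_subset _ M))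

/-- The alternating path of `M ∆ M'` starting at `w` either ends with an `M`-edge, and then
augments `M'`, or with an `M'`-edge at some `x`, and then switching `M` along it frees `w` at the
cost of covering `x`. The path is peeled off two edges at a time. -/
theorem IsMatchingSet.exchange (hM : IsMatchingSet G M) (hM' : IsMatchingSet G M')
    (hw : Covers M w) (hw' : ¬ Covers M' w) : AugmentableWithin G M M' ∨ FreeableAt G M M' w := by
  induction M using Finset.strongInduction generalizing M' w with
  | _ M ih =>
  obtain ⟨_, he, hwe⟩ := hw
  obtain ⟨x₁, rfl⟩ := Sym2.mem_iff_exists.mp hwe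
  have hwx₁ : G.Adj w x₁ := hM.1 _ he
  by_cases hx₁ : Covers M' x₁
  swap
  · exact .inl (augmentableWithin_of_not_covers hM' hwx₁ he hw' hx₁)
  obtain ⟨_, hf, hx₁f⟩ := hx₁
  obtain ⟨x₂, rfl⟩ := Sym2.mem_iff_exists.mp hx₁f
  have hwx₂ : w ≠ x₂ := by rintro rfl; exact hw' ⟨_, hf, Sym2.mem_mk_right x₁ w⟩
  have hMe := fun v => hM.covers_erase_iff (v := v) he
  by_cases hx₂ : Covers M x₂
  · have hx₂e : x₂ ∉ s(w, x₁) := by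
      simp only [Sym2.mem_iff, not_or]; exact ⟨hwx₂.symm, (hM'.1 _ hf).ne'⟩
    rcases ih _ (erase_ssubset he) (hM.subset (erase_subset _ M))
        (hM'.subset (erase_subset _ M')) ((hMe x₂).mpr ⟨hx₂, hx₂e⟩)
        (fun h => ((hM'.covers_erase_iff hf).mp h).2 (Sym2.mem_mk_right x₁ x₂)) with h | h
    exacts [.inl (h.of_erase hM hM' he hf hw'), .inr (h.of_erase hM hM' he hf hw' hx₂)]
  · exact .inr <| freeableAt_of_insert (hM.subset (erase_subset _ M)) (card_erase_add_one he)
      (hM'.1 _ hf) (fun h => ((hMe w).mp h).2 (Sym2.mem_mk_left w x₁))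
      (fun h => ((hMe x₁).mp h).2 (Sym2.mem_mk_right w x₁))
      (fun h => hx₂ (h.mono (erase_subset _ M))) hwx₁.ne hwx₂ ⟨_, he, Sym2.mem_mk_right w x₁⟩
      (.inr rfl) ⟨_, hf, Sym2.mem_mk_right x₁ x₂⟩
      fun v hv => .inl (hv.mono (erase_subset _ M))

end Exchange

namespace SimpleGraph

lemma exists_sup_eq_of_not_reachable {G : SimpleGraph V} {u w : V} (hu : u ∈ G.support)
    (hw : w ∈ G.support) (huw : ¬ G.Reachable u w) : ∃ G₁ G₂ : SimpleGraph V, G₁ ⊔ G₂ = G ∧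
      Disjoint G₁.support G₂.support ∧ G₁ ≠ ⊥ ∧ G₂ ≠ ⊥ := by
  set A := {x | G.Reachable u x}
  have hA : ∀ ⦃x y⦄, G.Adj x y → (x ∈ A ↔ y ∈ A) := fun x y hxy =>
    ⟨fun h => h.trans hxy.reachable, fun h => h.trans hxy.symm.reachable⟩
  have hne : ∀ s : Set V, ∀ x ∈ s, x ∈ G.support → (∀ ⦃x y⦄, G.Adj x y → x ∈ s → y ∈ s) →
      (G.induce s).spanningCoe ≠ ⊥ := by
    intro s x hx hxG hs
    obtain ⟨y, hxy⟩ := G.mem_support.mp hxG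
    exact ne_bot_iff_exists_adj.mpr ⟨x, y, by simpa using ⟨hxy, hx, hs hxy hx⟩⟩
  refine ⟨(G.induce A).spanningCoe, (G.induce Aᶜ).spanningCoe, ?_, ?_,
    hne A u (Reachable.refl u) hu fun x y hxy => (hA hxy).mp,
    hne Aᶜ w huw hw fun x y hxy => mt (hA hxy).mpr⟩
  · refine le_antisymm (sup_le (G.spanningCoe_induce_le A) (G.spanningCoe_induce_le Aᶜ))
      fun x y hxy => ?_
    by_cases hx : x ∈ A
    · exact .inl (by simpa using ⟨hxy, hx, (hA hxy).mp hx⟩)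
    · exact .inr (by simpa using ⟨hxy, hx, mt (hA hxy).mpr hx⟩)
  · rw [Set.disjoint_left]
    rintro x ⟨y, hxy⟩ ⟨z, hxz⟩
    simp at hxy hxz
    exact hxz.2.1 hxy.2.1

section MatchingNumber

variable [Fintype V] {G : SimpleGraph V} {M : Finset (Sym2 V)} {u v : V}

noncomputable def matchingNumber (G : SimpleGraph V) : ℕ :=
  open Classical in (univ.filter (IsMatchingSet G)).sup card

lemma _root_.IsMatchingSet.card_le_matchingNumber (hM : IsMatchingSet G M) :
    #M ≤ G.matchingNumber := by
  classical
  exact le_sup (f := card) (mem_filter.mpr ⟨mem_univ M, hM⟩)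

lemma exists_isMatchingSet_card_eq_matchingNumber (G : SimpleGraph V) :
    ∃ M, IsMatchingSet G M ∧ #M = G.matchingNumber := by
  classical
  obtain ⟨M, hM, hcard⟩ := exists_mem_eq_sup (univ.filter (IsMatchingSet G))
    ⟨∅, mem_filter.mpr ⟨mem_univ _, by simp [IsMatchingSet]⟩⟩ card
  exact ⟨M, (mem_filter.mp hM).2, by rw [matchingNumber]; convert hcard.symm⟩

variable [DecidableEq V]

lemma not_adj_of_not_covers (hM : IsMatchingSet G M) (hmax : #M = G.matchingNumber)
    (hu : ¬ Covers M u) (hv : ¬ Covers M v) : ¬ G.Adj u v := fun huv => by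
  have := (hM.insert huv hu hv).card_le_matchingNumber
  rw [card_insert_of_not_covers hu] at this
  omega

/-- Gallai's lemma. -/
theorem eq_of_reachable_of_not_covers
    (hcrit : ∀ w, G.matchingNumber ≤ (G.deleteIncidenceSet w).matchingNumber)
    (huv : G.Reachable u v) (hM : IsMatchingSet G M) (hmax : #M = G.matchingNumber)
    (hu : ¬ Covers M u) (hv : ¬ Covers M v) : u = v := by
  obtain ⟨p⟩ := huv
  induction p generalizing M with
  | nil => rfl
  | @cons u w v huw _ ih =>
    by_contra hne
    have hw : Covers M w := by
      by_contra hw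
      exact not_adj_of_not_covers hM hmax hu hw huw
    obtain ⟨M', hM', hcard'⟩ := (G.deleteIncidenceSet w).exists_isMatchingSet_card_eq_matchingNumber
    have hM'G := hM'.mono (G.deleteIncidenceSet_le w)
    have hmax' : #M' = G.matchingNumber :=
      le_antisymm hM'G.card_le_matchingNumber (hcard' ▸ hcrit w)
    rcases hM.exchange hM'G hw hM'.not_covers_of_deleteIncidenceSet with
      ⟨N, hN, hcard, -⟩ | ⟨N, x, hN, hcard, hNw, -, hcov⟩
    · have := hN.card_le_matchingNumber
      omega
    by_cases hvx : v = x
    · have hNu : ¬ Covers N u := fun h => (hcov u h).elim hu (fun hux => hne (hux.trans hvx.symm))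
      exact not_adj_of_not_covers hN (hcard.trans hmax) hNu hNw huw
    · have hNv : ¬ Covers N v := fun h => (hcov v h).elim hv hvx
      exact hv (ih hN (hcard.trans hmax) hNw hNv ▸ hw)

lemma matchingNumber_add_le_of_disjoint_support {G₁ G₂ : SimpleGraph V} (h₁ : G₁ ≤ G)
    (h₂ : G₂ ≤ G) (hdisj : Disjoint G₁.support G₂.support) :
    G₁.matchingNumber + G₂.matchingNumber ≤ G.matchingNumber := by
  obtain ⟨M₁, hM₁, hcard₁⟩ := G₁.exists_isMatchingSet_card_eq_matchingNumber
  obtain ⟨M₂, hM₂, hcard₂⟩ := G₂.exists_isMatchingSet_card_eq_matchingNumber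
  have hcov : ∀ v, Covers M₁ v → ¬ Covers M₂ v := fun v hv₁ hv₂ =>
    hdisj.notMem_of_mem_left (hM₁.mem_support hv₁) (hM₂.mem_support hv₂)
  rw [← hcard₁, ← hcard₂, ← card_union_of_disjoint (disjoint_of_not_covers hcov)]
  exact ((hM₁.mono h₁).union (hM₂.mono h₂) hcov).card_le_matchingNumber

variable [DecidableRel G.Adj] {d : ℕ}

lemma card_edgeFinset_eq_add_of_disjoint_support {G₁ G₂ : SimpleGraph V} [DecidableRel G₁.Adj]
    [DecidableRel G₂.Adj] (h : G₁ ⊔ G₂ = G) (hdisj : Disjoint G₁.support G₂.support) :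
    #G.edgeFinset = #G₁.edgeFinset + #G₂.edgeFinset := by
  have hE : Disjoint G₁.edgeFinset G₂.edgeFinset := by
    rw [Finset.disjoint_left]
    intro e he₁ he₂
    induction e using Sym2.ind with
    | _ a b =>
      exact hdisj.notMem_of_mem_left (mem_edgeFinset.mp he₁ : G₁.Adj a b).left_mem_support
        (mem_edgeFinset.mp he₂ : G₂.Adj a b).left_mem_support
  subst h
  rw [← card_union_of_disjoint hE, ← edgeFinset_sup]
  convert rfl

lemma card_edgeFinset_le_of_forall_matchingNumber_le (hd : ∀ v, G.degree v ≤ d)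
    (hcrit : ∀ w, G.matchingNumber ≤ (G.deleteIncidenceSet w).matchingNumber)
    (hconn : ∀ u ∈ G.support, ∀ v ∈ G.support, G.Reachable u v) :
    #G.edgeFinset ≤ G.matchingNumber * (d + 1) := by
  obtain ⟨M, hM, hmax⟩ := G.exists_isMatchingSet_card_eq_matchingNumber
  set C := M.biUnion Sym2.toFinset
  have hC : ∀ v, v ∈ C ↔ Covers M v := by simp [C, Covers]
  have hcardC : #C ≤ 2 * #M := by
    refine card_biUnion_le.trans ((sum_le_card_nsmul M _ 2 fun e _ => ?_).trans_eq (mul_comm _ _))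
    rw [Sym2.card_toFinset]; split_ifs <;> norm_num
  have hsupp : ∀ v, 0 < G.degree v → v ∈ G.support := fun v hv =>
    G.mem_support.mpr ((G.degree_pos_iff_exists_adj v).mp hv)
  have hU : #(Cᶜ.filter fun v => 0 < G.degree v) ≤ 1 := by
    refine card_le_one.mpr fun a ha b hb => ?_
    simp only [mem_filter, mem_compl, hC] at ha hb
    exact eq_of_reachable_of_not_covers hcrit (hconn a (hsupp a ha.2) b (hsupp b hb.2)) hM hmax
      ha.1 hb.1
  have hdegC : ∀ v ∈ Cᶜ, G.degree v ≤ #C := fun v hv => by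
    rw [← card_neighborFinset_eq_degree]
    refine card_le_card fun u hu => ?_
    by_contra huC
    exact not_adj_of_not_covers hM hmax (by simpa [hC] using hv) (by simpa [hC] using huC)
      ((mem_neighborFinset G v u).mp hu)
  have hin : ∑ v ∈ C, G.degree v ≤ #C * d := by
    simpa using sum_le_card_nsmul C _ d fun v _ => hd v
  have hout : ∑ v ∈ Cᶜ, G.degree v ≤ #C := by
    rw [← sum_filter_of_ne fun v _ h => Nat.pos_of_ne_zero h]
    simpa using (sum_le_card_nsmul _ _ #C fun v hv => hdegC v (mem_filter.mp hv).1).trans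
      (Nat.mul_le_mul_right _ hU)
  have htwice : 2 * #G.edgeFinset ≤ #C * (d + 1) := by
    rw [← sum_degrees_eq_twice_card_edges, ← sum_add_sum_compl C]
    linarith
  nlinarith

lemma card_edgeFinset_deleteIncidenceSet_lt {v : V}
    (hv : (G.deleteIncidenceSet v).matchingNumber < G.matchingNumber) :
    #(G.deleteIncidenceSet v).edgeFinset < #G.edgeFinset := by
  have hpos : 0 < G.degree v := by
    by_contra h0
    have hnadj : ∀ u, ¬ G.Adj v u := fun u huv =>
      h0 ((G.degree_pos_iff_exists_adj v).mpr ⟨u, huv⟩)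
    have : G.deleteIncidenceSet v = G := by
      ext x y
      simp only [deleteIncidenceSet_adj, and_iff_left_iff_imp]
      rintro hxy
      exact ⟨by rintro rfl; exact hnadj y hxy, by rintro rfl; exact hnadj x hxy.symm⟩
    simp [this] at hv
  rw [card_edgeFinset_deleteIncidenceSet]
  have := G.degree_le_card_edgeFinset v
  omega

lemma card_edgeFinset_le_of_matchingNumber_deleteIncidenceSet_lt {v : V}
    (hv : (G.deleteIncidenceSet v).matchingNumber < G.matchingNumber) (hdv : G.degree v ≤ d)
    (h : #(G.deleteIncidenceSet v).edgeFinset ≤ (G.deleteIncidenceSet v).matchingNumber * (d + 1)) :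
    #G.edgeFinset ≤ G.matchingNumber * (d + 1) := by
  have hsplit : #(G.deleteIncidenceSet v).edgeFinset + G.degree v = #G.edgeFinset := by
    have := G.degree_le_card_edgeFinset v
    rw [card_edgeFinset_deleteIncidenceSet]
    omega
  have : ((G.deleteIncidenceSet v).matchingNumber + 1) * (d + 1) ≤ G.matchingNumber * (d + 1) :=
    Nat.mul_le_mul_right _ hv
  nlinarith

theorem card_edgeFinset_le_matchingNumber_mul_succ (hd : ∀ v, G.degree v ≤ d) :
    #G.edgeFinset ≤ G.matchingNumber * (d + 1) := by
  induction hn : #G.edgeFinset using Nat.strong_induction_on generalizing G with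
  | _ n ih =>
  subst hn
  have ih' (H : SimpleGraph V) [DecidableRel H.Adj] (hle : H ≤ G)
      (hlt : #H.edgeFinset < #G.edgeFinset) : #H.edgeFinset ≤ H.matchingNumber * (d + 1) :=
    @ih _ hlt H _ (fun v => (degree_le_of_le hle).trans (hd v)) rfl
  by_cases hess : ∃ v, (G.deleteIncidenceSet v).matchingNumber < G.matchingNumber
  · obtain ⟨v, hv⟩ := hess
    exact card_edgeFinset_le_of_matchingNumber_deleteIncidenceSet_lt hv (hd v)
      (ih' _ (G.deleteIncidenceSet_le v) (card_edgeFinset_deleteIncidenceSet_lt hv))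
  push Not at hess
  by_cases hconn : ∀ u ∈ G.support, ∀ v ∈ G.support, G.Reachable u v
  · exact card_edgeFinset_le_of_forall_matchingNumber_le hd hess hconn
  push Not at hconn
  obtain ⟨u, hu, w, hw, huw⟩ := hconn
  obtain ⟨G₁, G₂, hsup, hdisj, hG₁, hG₂⟩ := exists_sup_eq_of_not_reachable hu hw huw
  have hle₁ : G₁ ≤ G := hsup ▸ le_sup_left
  have hle₂ : G₂ ≤ G := hsup ▸ le_sup_right
  classical
  have hcard := card_edgeFinset_eq_add_of_disjoint_support hsup hdisj
  have h₁ := card_pos.mpr (edgeFinset_nonempty.mpr hG₁)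
  have h₂ := card_pos.mpr (edgeFinset_nonempty.mpr hG₂)
  calc #G.edgeFinset = #G₁.edgeFinset + #G₂.edgeFinset := hcard
    _ ≤ G₁.matchingNumber * (d + 1) + G₂.matchingNumber * (d + 1) :=
      add_le_add (ih' G₁ hle₁ (by omega)) (ih' G₂ hle₂ (by omega))
    _ ≤ G.matchingNumber * (d + 1) := by
      rw [← add_mul]
      exact Nat.mul_le_mul_right _ (matchingNumber_add_le_of_disjoint_support hle₁ hle₂ hdisj)

lemma card_edgeFinset_le_sum_degree_of_isVertexCover {s : Finset V} (hs : G.IsVertexCover s) :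
    #G.edgeFinset ≤ ∑ v ∈ s, G.degree v := by
  have : G.edgeFinset ⊆ s.biUnion fun v => G.incidenceFinset v := fun e he => by
    induction e using Sym2.ind with
    | _ a b =>
      have hab : G.Adj a b := mem_edgeFinset.mp he
      simp only [mem_biUnion]
      rcases hs hab with ha | hb
      · exact ⟨a, ha, (G.mem_incidenceFinset a _).mpr ⟨hab, Sym2.mem_mk_left a b⟩⟩
      · exact ⟨b, hb, (G.mem_incidenceFinset b _).mpr ⟨hab, Sym2.mem_mk_right a b⟩⟩
  simpa only [card_incidenceFinset_eq_degree] using (card_le_card this).trans card_biUnion_le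

end MatchingNumber

end SimpleGraph

section Copies

open Function

variable {G : SimpleGraph V}

def IsCopyMap {α : Type*} (H : SimpleGraph α) (G : SimpleGraph V) (f : α → V) : Prop :=
  Injective f ∧ ∀ a b, H.Adj a b → G.Adj (f a) (f b)

lemma IsCopyMap.containsCopy {α : Type*} {H : SimpleGraph α} {f : α → V}
    (hf : IsCopyMap H G f) : ContainsCopy H G :=
  ⟨f, hf⟩

lemma IsCopyMap.sumElim {α β : Type*} {H : SimpleGraph α} {K : SimpleGraph β}
    {f : α → V} {g : β → V} (hf : IsCopyMap H G f) (hg : IsCopyMap K G g)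
    (hfg : Disjoint (Set.range f) (Set.range g)) :
    IsCopyMap (disjUnionGraph H K) G (Sum.elim f g) := by
  refine ⟨hf.1.sumElim hg.1 fun a b h => Set.disjoint_left.mp hfg ⟨a, rfl⟩ ⟨b, h.symm⟩, ?_⟩
  rintro (a | a) (b | b) hab <;> simp only [disjUnionGraph, SimpleGraph.fromRel_adj] at hab
  · exact hf.2 a b (hab.2.elim id SimpleGraph.Adj.symm)
  · simp at hab
  · simp at hab
  · exact hg.2 a b (hab.2.elim id SimpleGraph.Adj.symm)

lemma isCopyMap_kMatching_one {x y : V} (h : G.Adj x y) : IsCopyMap (kMatching 1) G ![x, y] := by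
  refine ⟨fun a b hab => ?_, fun a b hab => ?_⟩
  · fin_cases a <;> fin_cases b <;> simp_all [h.ne, h.ne.symm]
  · fin_cases a <;> fin_cases b <;> simp_all [kMatching, h.symm]

lemma containsCopy_kMatching_of_le_card {M : Finset (Sym2 V)} {k : ℕ} (hM : IsMatchingSet G M)
    (hk : k ≤ #M) : ContainsCopy (kMatching k) G := by
  obtain ⟨T, hTM, hT⟩ := exists_subset_card_eq hk
  set e : Fin k → Sym2 V := fun i => (T.equivFinOfCardEq hT).symm i
  have he : Injective e := Subtype.val_injective.comp (T.equivFinOfCardEq hT).symm.injective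
  have heM : ∀ i, e i ∈ M := fun i => hTM ((T.equivFinOfCardEq hT).symm i).2
  choose p hp using fun i => Quot.exists_rep (e i)
  -- vertex `j` is an end of the edge `j / 2`, which end depending on the parity of `j`
  have hj : ∀ j : Fin (2 * k), (j : ℕ) / 2 < k := fun j => by omega
  set f : Fin (2 * k) → V := fun j =>
    if (j : ℕ) % 2 = 0 then (p ⟨j / 2, hj j⟩).1 else (p ⟨j / 2, hj j⟩).2
  have hf : ∀ j : Fin (2 * k), f j ∈ e ⟨j / 2, hj j⟩ := fun j => by
    rw [← hp]; dsimp only [f]; split_ifs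
    exacts [Sym2.mem_mk_left _ _, Sym2.mem_mk_right _ _]
  have hadj : ∀ a b : Fin (2 * k), (a : ℕ) / 2 = b / 2 → (a : ℕ) % 2 ≠ b % 2 →
      G.Adj (f a) (f b) := fun a b hab hpar => by
    have hi : (⟨b / 2, hj b⟩ : Fin k) = ⟨a / 2, hj a⟩ := Fin.ext hab.symm
    have hedge : G.Adj (p ⟨a / 2, hj a⟩).1 (p ⟨a / 2, hj a⟩).2 := by
      have := hM.1 _ (heM ⟨a / 2, hj a⟩)
      rwa [← hp] at this
    dsimp only [f]; rw [hi]
    rcases Nat.mod_two_eq_zero_or_one a with ha | ha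
    · rw [if_pos ha, if_neg (by omega)]; exact hedge
    · rw [if_neg (by omega), if_pos (by omega)]; exact hedge.symm
  refine IsCopyMap.containsCopy (f := f) ⟨fun a b hab => ?_, fun a b hab => ?_⟩
  · by_contra hne
    by_cases hdiv : (a : ℕ) / 2 = b / 2
    · exact (hadj a b hdiv (fun h => hne (Fin.ext (by omega)))).ne hab
    · have := hf b
      rw [← hab] at this
      exact hM.2 _ (heM _) _ (heM _) (fun h => hdiv (congrArg Fin.val (he h))) _ (hf a) this
  · rw [kMatching, SimpleGraph.fromRel_adj] at hab
    have hab' : (a : ℕ) / 2 = b / 2 := hab.2.elim id Eq.symm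
    exact hadj a b hab' (fun h => hab.1 (Fin.ext (by omega)))

variable [Fintype V] [DecidableRel G.Adj]

lemma exists_isCopyMap_starGraph {m : ℕ} {v : V} (h : m ≤ G.degree v) :
    ∃ f, IsCopyMap (starGraph m) G f ∧ Set.range f ⊆ insert v (G.neighborSet v) := by
  obtain ⟨g, hg⟩ := Function.Embedding.exists_of_card_le_finset
    (α := Fin m) (s := G.neighborFinset v) (by simpa using h)
  have hadj : ∀ i, G.Adj v (g i) := fun i => (G.mem_neighborFinset v _).mp (hg ⟨i, rfl⟩)
  refine ⟨Sum.elim (fun _ => v) g, ⟨?_, ?_⟩, ?_⟩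
  · exact injective_of_subsingleton _ |>.sumElim g.injective fun _ i h => (hadj i).ne h
  · rintro (a | i) (b | j) hab <;> simp [starGraph] at hab
    · exact hadj j
    · exact (hadj i).symm
  · rintro _ ⟨a | i, rfl⟩
    · exact Set.mem_insert v _
    · exact Set.mem_insert_of_mem v (hadj i)

lemma containsCopy_starGraph_of_le_degree {m : ℕ} {v : V} (h : m ≤ G.degree v) :
    ContainsCopy (starGraph m) G :=
  (exists_isCopyMap_starGraph h).choose_spec.1.containsCopy

lemma isVertexCover_neighborSet {m : ℕ} {v : V} (hv : m ≤ G.degree v)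
    (h : ¬ ContainsCopy (disjUnionGraph (starGraph m) (kMatching 1)) G) :
    G.IsVertexCover (G.neighborSet v) := by
  intro x y hxy
  by_contra! hout
  have hxv : x ≠ v := by rintro rfl; exact hout.2 hxy
  have hyv : y ≠ v := by rintro rfl; exact hout.1 hxy.symm
  obtain ⟨f, hf, hrange⟩ := exists_isCopyMap_starGraph hv
  refine h (hf.sumElim (isCopyMap_kMatching_one hxy) ?_).containsCopy
  rw [Set.disjoint_right]
  rintro _ ⟨i, rfl⟩ hi
  fin_cases i <;> simpa [hxv, hyv, hout.1, hout.2] using hrange hi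

end Copies

end MatchingBound

theorem star_matching_free_bound_general {V : Type*} [Fintype V] [DecidableEq V] (G : SimpleGraph V)
    [DecidableRel G.Adj] (k : ℕ) (hk : 2 ≤ k)
    (h1 : ¬ ContainsCopy (starGraph k) G)
    (h2 : ¬ ContainsCopy (kMatching k) G)
    (h3 : ¬ ContainsCopy (disjUnionGraph (starGraph (k - 1)) (kMatching 1)) G) :
    G.edgeFinset.card ≤ (k - 1) ^ 2 := by
  have hdeg : ∀ v, G.degree v ≤ k - 1 := fun v => by
    by_contra! h
    exact h1 (containsCopy_starGraph_of_le_degree (v := v) (by omega))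
  have hν : G.matchingNumber ≤ k - 1 := by
    by_contra! h
    obtain ⟨M, hM, hcard⟩ := G.exists_isMatchingSet_card_eq_matchingNumber
    exact h2 (containsCopy_kMatching_of_le_card hM (by omega))
  rw [sq]
  by_cases hmax : ∃ v, G.degree v = k - 1
  · obtain ⟨v, hv⟩ := hmax
    have hcover : G.IsVertexCover (G.neighborFinset v : Set V) := by
      simpa using isVertexCover_neighborSet hv.ge h3
    calc #G.edgeFinset ≤ ∑ u ∈ G.neighborFinset v, G.degree u :=
          SimpleGraph.card_edgeFinset_le_sum_degree_of_isVertexCover hcover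
      _ ≤ (k - 1) * (k - 1) := by
          simpa [hv] using Finset.sum_le_card_nsmul (G.neighborFinset v) _ _ fun u _ => hdeg u
  · push Not at hmax
    calc #G.edgeFinset ≤ G.matchingNumber * (k - 2 + 1) :=
          SimpleGraph.card_edgeFinset_le_matchingNumber_mul_succ fun v => by
            have := hdeg v; have := hmax v; omega
      _ ≤ (k - 1) * (k - 1) := Nat.mul_le_mul hν (by omega)

theorem star_matching_free_bound {V : Type*} [Fintype V] [DecidableEq V] (G : SimpleGraph V)
    [DecidableRel G.Adj] (k : ℕ) (hk : 2 ≤ k)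
    (hiso : ∀ v : V, 0 < G.degree v)
    (h1 : ¬ ContainsCopy (starGraph k) G)
    (h2 : ¬ ContainsCopy (kMatching k) G)
    (h3 : ¬ ContainsCopy (disjUnionGraph (starGraph (k - 1)) (kMatching 1)) G) :
    G.edgeFinset.card ≤ (k - 1) ^ 2 :=
  star_matching_free_bound_general G k hk h1 h2 h3
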